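/- (Theorem 1, invariance part.) Let d ≥ 3 and let u : ℝ × ℝ^d → ℝ^d be a smooth real Schur flow satisfying the barotropic Euler equation with smooth potential Π. Set M = ⌊(d+1)/2⌋. For each i with 1 ≤ i ≤ M, define the 1-form field U_i by (U_i)_k = u_k if k ∈ {2i−1, 2i} and k ≤ d, and (U_i)_k = 0 otherwise, and define the antisymmetric 2-form field Ω_i by (Ω_i)_{jk} = ∂_j (U_i)_k − ∂_k (U_i)_j. Then each Ω_i is Lie-transported by u: for all j, k, ∂_t (Ω_i)_{jk} + Σ_{m=1}^{d} ( u_m ∂_m (Ω_i)_{jk} + (Ω_i)_{mk} ∂_j u_m + (Ω_i)_{jm} ∂_k u_m ) = 0. -/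

import Mathlib

/-- Partial derivative in time of a function on `ℝ × ℝ^d`. -/
noncomputable def pdt {d : ℕ} (f : ℝ × (Fin d → ℝ) → ℝ) (p : ℝ × (Fin d → ℝ)) : ℝ :=
  fderiv ℝ f p (1, 0)

/-- Partial derivative in the `j`-th spatial coordinate of a function on `ℝ × ℝ^d`. -/
noncomputable def pdx {d : ℕ} (j : Fin d) (f : ℝ × (Fin d → ℝ) → ℝ) (p : ℝ × (Fin d → ℝ)) : ℝ :=
  fderiv ℝ f p (0, Pi.single j 1)

/-- Real Schur flow: with 1-based indices `J = j+1`, `K = k+1`, we have `∂_J u_K = 0`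
whenever `J > 2⌈K/2⌉`; here `⌈K/2⌉ = (K+1)/2` in natural-number division. -/
def IsRSF {d : ℕ} (u : Fin d → ℝ × (Fin d → ℝ) → ℝ) : Prop :=
  ∀ j k : Fin d, 2 * (((k : ℕ) + 1 + 1) / 2) < (j : ℕ) + 1 → ∀ p, pdx j (u k) p = 0

/-! For constant weights `c`, the 2-form `Ω_jk = c_k ∂_j u_k − c_j ∂_k u_j` is the exterior
derivative of the 1-form `(c_k u_k)_k`, and its Lie derivative along `∂_t + u · ∇` is
`c_k ∂_j (D_t u_k) − c_j ∂_k (D_t u_j)`, where `D_t` is the material derivative: the terms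
`c_m ∂_j u_m ∂_k u_m` produced by transporting `Ω` cancel in pairs (they come from the
exterior derivative of a gradient). The Euler equation `D_t u = −∇Π` turns this into
`(c_j − c_k) ∂_j ∂_k Π`. For the indicator `c` of the pair `{2i − 1, 2i}` this vanishes unless
`j` and `k` lie in different pairs, and then `∂_j ∂_k Π = 0` for a real Schur flow:
differentiating the Euler equation for `u_k` in the later direction `j`, every term contains
a derivative of some velocity component in a direction beyond its own pair. -/

section
variable {E : Type*} [NormedAddCommGroup E] [NormedSpace ℝ E] {f : E → ℝ}

theorem ContDiff.fderiv_apply_const (hf : ContDiff ℝ 2 f) (v : E) :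
    ContDiff ℝ 1 (fun q => fderiv ℝ f q v) :=
  (hf.fderiv_right le_rfl).clm_apply contDiff_const

theorem fderiv_fderiv_apply_comm (hf : ContDiff ℝ 2 f) (p v w : E) :
    fderiv ℝ (fun q => fderiv ℝ f q w) p v = fderiv ℝ (fun q => fderiv ℝ f q v) p w := by
  have hd : DifferentiableAt ℝ (fderiv ℝ f) p :=
    (hf.fderiv_right le_rfl).differentiable one_ne_zero p
  rw [fderiv_clm_apply hd (differentiableAt_const w),
    fderiv_clm_apply hd (differentiableAt_const v)]
  simpa using (hf.contDiffAt.isSymmSndFDerivAt (by simp)).eq v w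

end

section
variable {d : ℕ} {f g : ℝ × (Fin d → ℝ) → ℝ} {j : Fin d} {p : ℝ × (Fin d → ℝ)}

theorem ContDiff.differentiableAt_pdx (hf : ContDiff ℝ 2 f) (j : Fin d) (p : ℝ × (Fin d → ℝ)) :
    DifferentiableAt ℝ (pdx j f) p :=
  (hf.fderiv_apply_const _).differentiable one_ne_zero p

theorem ContDiff.differentiableAt_pdt (hf : ContDiff ℝ 2 f) (p : ℝ × (Fin d → ℝ)) :
    DifferentiableAt ℝ (pdt f) p :=
  (hf.fderiv_apply_const _).differentiable one_ne_zero p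

theorem pdx_pdx_comm (hf : ContDiff ℝ 2 f) (j k : Fin d) (p : ℝ × (Fin d → ℝ)) :
    pdx j (pdx k f) p = pdx k (pdx j f) p :=
  fderiv_fderiv_apply_comm hf p _ _

theorem pdx_pdt_comm (hf : ContDiff ℝ 2 f) (j : Fin d) (p : ℝ × (Fin d → ℝ)) :
    pdx j (pdt f) p = pdt (pdx j f) p :=
  fderiv_fderiv_apply_comm hf p _ _

theorem pdx_add (hf : DifferentiableAt ℝ f p) (hg : DifferentiableAt ℝ g p) :
    pdx j (fun q => f q + g q) p = pdx j f p + pdx j g p := by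
  simp only [pdx, fderiv_fun_add hf hg, add_apply]

theorem pdx_mul (hf : DifferentiableAt ℝ f p) (hg : DifferentiableAt ℝ g p) :
    pdx j (fun q => f q * g q) p = pdx j f p * g p + f p * pdx j g p := by
  simp only [pdx, fderiv_fun_mul hf hg, add_apply, smul_apply, smul_eq_mul]
  ring

theorem pdx_sum {ι : Type*} (s : Finset ι) {F : ι → ℝ × (Fin d → ℝ) → ℝ}
    (hF : ∀ m ∈ s, DifferentiableAt ℝ (F m) p) :
    pdx j (fun q => ∑ m ∈ s, F m q) p = ∑ m ∈ s, pdx j (F m) p := by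
  simp only [pdx, fderiv_fun_sum hF, sum_apply]

end

noncomputable def materialDeriv {d : ℕ} (u : Fin d → ℝ × (Fin d → ℝ) → ℝ) (k : Fin d)
    (p : ℝ × (Fin d → ℝ)) : ℝ :=
  pdt (u k) p + ∑ m, u m p * pdx m (u k) p

noncomputable def lieDerivTwoForm {d : ℕ} (u : Fin d → ℝ × (Fin d → ℝ) → ℝ)
    (Ω : Fin d → Fin d → ℝ × (Fin d → ℝ) → ℝ) (j k : Fin d) (p : ℝ × (Fin d → ℝ)) : ℝ :=
  pdt (Ω j k) p
    + ∑ m, (u m p * pdx m (Ω j k) p + Ω m k p * pdx j (u m) p + Ω j m p * pdx k (u m) p)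

section
variable {d : ℕ} {u : Fin d → ℝ × (Fin d → ℝ) → ℝ}

theorem pdx_materialDeriv (hu : ∀ k, ContDiff ℝ 2 (u k)) (j k : Fin d) (p : ℝ × (Fin d → ℝ)) :
    pdx j (materialDeriv u k) p = pdt (pdx j (u k)) p
      + ∑ m, (pdx j (u m) p * pdx m (u k) p + u m p * pdx m (pdx j (u k)) p) := by
  have hdiff : ∀ m, DifferentiableAt ℝ (fun q => u m q * pdx m (u k) q) p := fun m =>
    ((hu m).differentiable two_ne_zero p).mul ((hu k).differentiableAt_pdx m p)
  have hprod : ∀ m, pdx j (fun q => u m q * pdx m (u k) q) p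
      = pdx j (u m) p * pdx m (u k) p + u m p * pdx m (pdx j (u k)) p := fun m => by
    rw [pdx_mul ((hu m).differentiable two_ne_zero p) ((hu k).differentiableAt_pdx m p),
      pdx_pdx_comm (hu k)]
  unfold materialDeriv
  rw [pdx_add ((hu k).differentiableAt_pdt p) (DifferentiableAt.fun_sum fun m _ => hdiff m),
    pdx_sum _ fun m _ => hdiff m, pdx_pdt_comm (hu k), Finset.sum_congr rfl fun m _ => hprod m]

theorem lieDerivTwoForm_eq (hu : ∀ k, ContDiff ℝ 2 (u k)) (c : Fin d → ℝ)
    {Ω : Fin d → Fin d → ℝ × (Fin d → ℝ) → ℝ}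
    (hΩ : ∀ j k q, Ω j k q = c k * pdx j (u k) q - c j * pdx k (u j) q)
    (j k : Fin d) (p : ℝ × (Fin d → ℝ)) :
    lieDerivTwoForm u Ω j k p
      = c k * pdx j (materialDeriv u k) p - c j * pdx k (materialDeriv u j) p := by
  have hD : ∀ v, fderiv ℝ (Ω j k) p v
      = c k * fderiv ℝ (pdx j (u k)) p v - c j * fderiv ℝ (pdx k (u j)) p v := fun v => by
    rw [show Ω j k = _ from funext (hΩ j k),
      fderiv_fun_sub (((hu k).differentiableAt_pdx j p).const_mul _)
        (((hu j).differentiableAt_pdx k p).const_mul _),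
      fderiv_const_mul ((hu k).differentiableAt_pdx j p),
      fderiv_const_mul ((hu j).differentiableAt_pdx k p)]
    simp only [sub_apply, smul_apply, smul_eq_mul]
  have hΩt : pdt (Ω j k) p = c k * pdt (pdx j (u k)) p - c j * pdt (pdx k (u j)) p := hD _
  have hΩx : ∀ m, pdx m (Ω j k) p = c k * pdx m (pdx j (u k)) p - c j * pdx m (pdx k (u j)) p :=
    fun m => hD _
  have hsummand : ∀ m, u m p * pdx m (Ω j k) p + Ω m k p * pdx j (u m) p + Ω j m p * pdx k (u m) p
      = c k * (pdx j (u m) p * pdx m (u k) p + u m p * pdx m (pdx j (u k)) p)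
        - c j * (pdx k (u m) p * pdx m (u j) p + u m p * pdx m (pdx k (u j)) p) := fun m => by
    rw [hΩx, hΩ m k, hΩ j m]
    ring
  rw [lieDerivTwoForm, hΩt, Finset.sum_congr rfl fun m _ => hsummand m,
    Finset.sum_sub_distrib, ← Finset.mul_sum, ← Finset.mul_sum, pdx_materialDeriv hu,
    pdx_materialDeriv hu]
  ring

end

section
variable {d : ℕ} {u : Fin d → ℝ × (Fin d → ℝ) → ℝ} {P : ℝ × (Fin d → ℝ) → ℝ}

theorem pdx_pdx_eq_neg_pdx_materialDeriv (heuler : ∀ k p, materialDeriv u k p = -pdx k P p)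
    (j k : Fin d) (p : ℝ × (Fin d → ℝ)) :
    pdx j (pdx k P) p = -pdx j (materialDeriv u k) p := by
  rw [show pdx k P = fun q => -materialDeriv u k q from funext fun q => by rw [heuler, neg_neg]]
  simp only [pdx, fderiv_fun_neg, neg_apply]

theorem lieDerivTwoForm_eq_sub_mul_pdx_pdx (hu : ∀ k, ContDiff ℝ 2 (u k)) (hP : ContDiff ℝ 2 P)
    (heuler : ∀ k p, materialDeriv u k p = -pdx k P p) (c : Fin d → ℝ)
    {Ω : Fin d → Fin d → ℝ × (Fin d → ℝ) → ℝ}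
    (hΩ : ∀ j k q, Ω j k q = c k * pdx j (u k) q - c j * pdx k (u j) q)
    (j k : Fin d) (p : ℝ × (Fin d → ℝ)) :
    lieDerivTwoForm u Ω j k p = (c j - c k) * pdx j (pdx k P) p := by
  have hjk := pdx_pdx_eq_neg_pdx_materialDeriv heuler j k p
  have hkj := pdx_pdx_eq_neg_pdx_materialDeriv heuler k j p
  rw [pdx_pdx_comm hP] at hkj
  rw [lieDerivTwoForm_eq hu c hΩ]
  linear_combination c k * hjk - c j * hkj

theorem pdx_pdx_pressure_eq_zero_of_isRSF (hu : ∀ k, ContDiff ℝ 2 (u k)) (hRSF : IsRSF u)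
    (heuler : ∀ k p, materialDeriv u k p = -pdx k P p) {j k : Fin d}
    (hjk : 2 * (((k : ℕ) + 1 + 1) / 2) < (j : ℕ) + 1) (p : ℝ × (Fin d → ℝ)) :
    pdx j (pdx k P) p = 0 := by
  have hterm : ∀ m, pdx j (u m) p * pdx m (u k) p = 0 := fun m => by
    by_cases hm : 2 * (((k : ℕ) + 1 + 1) / 2) < (m : ℕ) + 1
    · rw [hRSF m k hm, mul_zero]
    · rw [hRSF j m (by omega), zero_mul]
  rw [pdx_pdx_eq_neg_pdx_materialDeriv heuler, pdx_materialDeriv hu,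
    show pdx j (u k) = fun _ => 0 from funext (hRSF j k hjk)]
  simp only [hterm, zero_add]
  simp [pdt, pdx]

end

theorem rsf_component_vorticity_lie_transport_general
    {d : ℕ}
    (u : Fin d → ℝ × (Fin d → ℝ) → ℝ) (P : ℝ × (Fin d → ℝ) → ℝ)
    (hu : ∀ k, ContDiff ℝ (⊤ : ℕ∞) (u k)) (hP : ContDiff ℝ (⊤ : ℕ∞) P)
    (hRSF : IsRSF u)
    (heuler : ∀ k p, pdt (u k) p + ∑ j, u j p * pdx j (u k) p = -(pdx k P p))
    (i : ℕ)
    (U : Fin d → ℝ × (Fin d → ℝ) → ℝ)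
    (hU : ∀ k : Fin d, U k =
      if (k : ℕ) + 1 = 2 * i - 1 ∨ (k : ℕ) + 1 = 2 * i then u k else fun _ => 0)
    (Ω : Fin d → Fin d → ℝ × (Fin d → ℝ) → ℝ)
    (hΩ : ∀ j k p, Ω j k p = pdx j (U k) p - pdx k (U j) p) :
    ∀ j k p, pdt (Ω j k) p
      + ∑ m, (u m p * pdx m (Ω j k) p + Ω m k p * pdx j (u m) p + Ω j m p * pdx k (u m) p)
      = 0 := by
  intro j k p
  set c : Fin d → ℝ := fun m => if (m : ℕ) + 1 = 2 * i - 1 ∨ (m : ℕ) + 1 = 2 * i then 1 else 0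
  have hu2 : ∀ k, ContDiff ℝ 2 (u k) := fun k => (hu k).of_le (WithTop.coe_le_coe.mpr le_top)
  have hP2 : ContDiff ℝ 2 P := hP.of_le (WithTop.coe_le_coe.mpr le_top)
  have hΩc : ∀ j k q, Ω j k q = c k * pdx j (u k) q - c j * pdx k (u j) q := fun j k q => by
    rw [hΩ, hU, hU]
    simp only [c]
    split_ifs <;> simp [pdx]
  change lieDerivTwoForm u Ω j k p = 0
  rw [lieDerivTwoForm_eq_sub_mul_pdx_pdx hu2 hP2 heuler c hΩc]
  by_cases hcjk : c j = c k
  · rw [hcjk, sub_self, zero_mul]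
  have hblocks : 2 * (((k : ℕ) + 1 + 1) / 2) < (j : ℕ) + 1
      ∨ 2 * (((j : ℕ) + 1 + 1) / 2) < (k : ℕ) + 1 := by
    by_contra! hsame
    exact hcjk (if_congr (by omega) rfl rfl)
  rcases hblocks with h | h
  · rw [pdx_pdx_pressure_eq_zero_of_isRSF hu2 hRSF heuler h, mul_zero]
  · rw [pdx_pdx_comm hP2, pdx_pdx_pressure_eq_zero_of_isRSF hu2 hRSF heuler h, mul_zero]

/-- Theorem 1, invariance part: for a real Schur flow solving the barotropic
Euler equation, each vorticity component `Ω_i = d U_i`, where `U_i` keeps only the velocity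
components with 1-based indices `2i−1, 2i`, is Lie-transported by the full velocity `u`,
for `1 ≤ i ≤ M = ⌊(d+1)/2⌋`. -/
theorem rsf_component_vorticity_lie_transport
    {d : ℕ} (hd : 3 ≤ d)
    (u : Fin d → ℝ × (Fin d → ℝ) → ℝ) (P : ℝ × (Fin d → ℝ) → ℝ)
    (hu : ∀ k, ContDiff ℝ (⊤ : ℕ∞) (u k)) (hP : ContDiff ℝ (⊤ : ℕ∞) P)
    (hRSF : IsRSF u)
    (heuler : ∀ k p, pdt (u k) p + ∑ j, u j p * pdx j (u k) p = -(pdx k P p))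
    (i : ℕ) (hi : 1 ≤ i) (hiM : i ≤ (d + 1) / 2)
    (U : Fin d → ℝ × (Fin d → ℝ) → ℝ)
    (hU : ∀ k : Fin d, U k =
      if (k : ℕ) + 1 = 2 * i - 1 ∨ (k : ℕ) + 1 = 2 * i then u k else fun _ => 0)
    (Ω : Fin d → Fin d → ℝ × (Fin d → ℝ) → ℝ)
    (hΩ : ∀ j k p, Ω j k p = pdx j (U k) p - pdx k (U j) p) :
    ∀ j k p, pdt (Ω j k) p
      + ∑ m, (u m p * pdx m (Ω j k) p + Ω m k p * pdx j (u m) p + Ω j m p * pdx k (u m) p)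
      = 0 :=
  rsf_component_vorticity_lie_transport_general u P hu hP hRSF heuler i U hU Ω hΩ
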